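/- Characterization of critical products of Łukasiewicz chains: let l ≥ 1 and let n : Fin l → ℕ be positive, and set A = ∏_{i<l} Ł_{n_i} (componentwise operations). Then A is critical (there exist no index type I, no family (B_t)_{t∈I} of proper subalgebras of A, and no injective homomorphism from A into ∏_{t∈I} B_t) if and only if: (1) n_i ≠ n_j whenever i ≠ j, and (2) for all j, j' < l, if there exists i ≠ j with n_i ∣ n_j and there exists i' ≠ j' with n_{i'} ∣ n_{j'}, then j = j'. -/

import Mathlib

/-- The carrier of the Łukasiewicz chain Łₙ : {k/n : k ∈ ℕ, 0 ≤ k ≤ n} ⊆ ℚ. -/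
abbrev Luk (n : ℕ+) : Type := {x : ℚ // ∃ k : ℕ, k ≤ (n : ℕ) ∧ x = (k : ℚ) / (n : ℕ)}

/-- The constant 0 of Łₙ. -/
def lukZero (n : ℕ+) : Luk n := ⟨0, 0, Nat.zero_le _, by simp⟩

/-- The negation ¬x = 1 - x of Łₙ. -/
def lukNeg {n : ℕ+} (x : Luk n) : Luk n :=
  ⟨1 - x.1, by
    obtain ⟨k, hk, hx⟩ := x.2
    refine ⟨(n : ℕ) - k, Nat.sub_le _ _, ?_⟩
    have hn : ((n : ℕ) : ℚ) ≠ 0 := by exact_mod_cast n.pos.ne'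
    rw [hx, Nat.cast_sub hk, sub_div, div_self hn]⟩

/-- The truncated sum x ⊕ y = min 1 (x + y) of Łₙ. -/
def lukOplus {n : ℕ+} (x y : Luk n) : Luk n :=
  ⟨min 1 (x.1 + y.1), by
    obtain ⟨k, hk, hx⟩ := x.2
    obtain ⟨j, hj, hy⟩ := y.2
    refine ⟨min (n : ℕ) (k + j), min_le_left _ _, ?_⟩
    have hn : (0 : ℚ) < ((n : ℕ) : ℚ) := by exact_mod_cast n.pos
    rw [hx, hy, ← add_div]
    rcases le_total (k + j) (n : ℕ) with h | h
    · rw [min_eq_right h, min_eq_right]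
      · push_cast; ring_nf
      · rw [div_le_one hn]; exact_mod_cast h
    · rw [min_eq_left h, min_eq_left, div_self hn.ne']
      · rw [one_le_div hn]; exact_mod_cast h⟩

/-- A subset of ∏ Ł_(n i) is a subalgebra if it contains 0 and is closed under
the componentwise operations ⊕ and ¬. -/
def IsProdSubalg {l : ℕ} {n : Fin l → ℕ+} (S : Set (∀ i, Luk (n i))) : Prop :=
  (fun i => lukZero (n i)) ∈ S ∧
    (∀ x ∈ S, ∀ y ∈ S, (fun i => lukOplus (x i) (y i)) ∈ S) ∧
    ∀ x ∈ S, (fun i => lukNeg (x i)) ∈ S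

/-- ∏ Ł_(n i) is critical: it admits no injective homomorphism into a product of
proper subalgebras of itself (the subalgebras carrying the induced operations). -/
def ProdLukCritical {l : ℕ} (n : Fin l → ℕ+) : Prop :=
  ¬ ∃ (I : Type) (B : I → Set (∀ i, Luk (n i))),
      (∀ t, IsProdSubalg (B t) ∧ B t ≠ Set.univ) ∧
      ∃ f : (∀ i, Luk (n i)) → ∀ t, (B t : Set (∀ i, Luk (n i))),
        Function.Injective f ∧
        (∀ a b t, ((f (fun i => lukOplus (a i) (b i)) t : ∀ i, Luk (n i)) =
          fun i => lukOplus ((f a t : ∀ i, Luk (n i)) i) ((f b t : ∀ i, Luk (n i)) i))) ∧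
        (∀ a t, ((f (fun i => lukNeg (a i)) t : ∀ i, Luk (n i)) =
          fun i => lukNeg ((f a t : ∀ i, Luk (n i)) i))) ∧
        (∀ t, ((f (fun i => lukZero (n i)) t : ∀ i, Luk (n i)) = fun i => lukZero (n i)))

/-!
A homomorphism `∏ Ł_(n i) → Ł_N` is a projection `a ↦ a i` with `n i ∣ N`: it sends some
idempotent `eᵢ` to `1`, and then `a ↦ a ⊙ eᵢ` reduces it to a homomorphism `Ł_(n i) → Ł_N`.
Such a map is the inclusion: it is determined by the image `x` of `1/n i`, and
`¬(1/n i) = (n i - 1)/n i` forces `x = 1/n i`.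

Hence an embedding into a product of proper subalgebras `B t` is, in coordinate `k` of the factor
`t`, a projection onto a coordinate `σ t k` with `n (σ t k) ∣ n k`, and `σ t` is never the
identity. If all indices `j` admitting some `i ≠ j` with `n i ∣ n j` coincide with one `j₀`, no
`σ t` takes the value `j₀`, so the map forgets coordinate `j₀`. Conversely, two such indices
`j ≠ j'` give an embedding into `{a | a i = a j} × {a | a i' = a j'}`. Pairwise distinctness is the
special case `n i = n j` of the second condition.
-/

namespace Luk

lemma val_nonneg {n : ℕ+} (x : Luk n) : 0 ≤ x.1 := by
  obtain ⟨k, -, hx⟩ := x.2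
  rw [hx]
  positivity

lemma val_le_one {n : ℕ+} (x : Luk n) : x.1 ≤ 1 := by
  obtain ⟨k, hk, hx⟩ := x.2
  rw [hx, div_le_one (by exact_mod_cast n.pos)]
  exact_mod_cast hk

end Luk

@[simp] lemma lukZero_val (n : ℕ+) : (lukZero n).1 = 0 := rfl

@[simp] lemma lukNeg_val {n : ℕ+} (x : Luk n) : (lukNeg x).1 = 1 - x.1 := rfl

@[simp] lemma lukOplus_val {n : ℕ+} (x y : Luk n) : (lukOplus x y).1 = min 1 (x.1 + y.1) := rfl

def lukOf (n : ℕ+) (k : ℕ) (hk : k ≤ (n : ℕ)) : Luk n := ⟨k / n, k, hk, rfl⟩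

@[simp] lemma lukOf_val (n : ℕ+) (k : ℕ) (hk : k ≤ (n : ℕ)) :
    (lukOf n k hk).1 = (k : ℚ) / (n : ℕ) := rfl

lemma Luk.exists_eq_lukOf {n : ℕ+} (x : Luk n) : ∃ k hk, x = lukOf n k hk := by
  obtain ⟨k, hk, hx⟩ := x.2
  exact ⟨k, hk, Subtype.ext hx⟩

lemma lukOf_zero (n : ℕ+) : lukOf n 0 (Nat.zero_le _) = lukZero n :=
  Subtype.ext (by simp)

lemma lukOf_self (n : ℕ+) : lukOf n n le_rfl = lukNeg (lukZero n) :=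
  Subtype.ext (by simp)

lemma lukOf_succ (n : ℕ+) (k : ℕ) (hk : k + 1 ≤ (n : ℕ)) :
    lukOf n (k + 1) hk = lukOplus (lukOf n k (by omega)) (lukOf n 1 n.pos) := by
  have hn : (0 : ℚ) < (n : ℕ) := by exact_mod_cast n.pos
  apply Subtype.ext
  rw [lukOplus_val, lukOf_val, lukOf_val, lukOf_val, ← add_div, min_eq_right]
  · push_cast; rfl
  · rw [div_le_one hn]; exact_mod_cast hk

lemma lukNeg_lukOf_one (n : ℕ+) :
    lukNeg (lukOf n 1 n.pos) = lukOf n ((n : ℕ) - 1) (Nat.sub_le _ _) := by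
  have hn : ((n : ℕ) : ℚ) ≠ 0 := by exact_mod_cast n.ne_zero
  apply Subtype.ext
  rw [lukNeg_val, lukOf_val, lukOf_val, Nat.cast_sub n.pos, sub_div, div_self hn]

def lukCast {m N : ℕ+} (h : (m : ℕ) ∣ (N : ℕ)) (x : Luk m) : Luk N :=
  ⟨x.1, by
    obtain ⟨k, hk, hx⟩ := x.2
    obtain ⟨c, hc⟩ := h
    have hc0 : c ≠ 0 := by rintro rfl; simp at hc
    refine ⟨k * c, hc ▸ Nat.mul_le_mul_right _ hk, ?_⟩
    rw [hx, hc]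
    push_cast
    rw [mul_div_mul_right _ _ (by exact_mod_cast hc0)]⟩

@[simp] lemma lukCast_val {m N : ℕ+} (h : (m : ℕ) ∣ (N : ℕ)) (x : Luk m) :
    (lukCast h x).1 = x.1 := rfl

lemma min_one_min_one_add {a b : ℚ} (hb : 0 ≤ b) : min 1 (min 1 a + b) = min 1 (a + b) := by
  rw [← min_add_add_right, ← min_assoc, min_eq_left (by linarith : (1 : ℚ) ≤ 1 + b)]

structure IsLukHom {α : Type*} (zero : α) (neg : α → α) (oplus : α → α → α) {N : ℕ+}
    (φ : α → Luk N) : Prop where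
  map_zero : φ zero = lukZero N
  map_neg : ∀ a, φ (neg a) = lukNeg (φ a)
  map_oplus : ∀ a b, φ (oplus a b) = lukOplus (φ a) (φ b)

namespace IsLukHom

section General

variable {α : Type*} {zero : α} {neg : α → α} {oplus : α → α → α} {N : ℕ+} {φ : α → Luk N}

lemma val_map_zero (hφ : IsLukHom zero neg oplus φ) : (φ zero).1 = 0 := by
  rw [hφ.map_zero]; rfl

lemma val_map_neg (hφ : IsLukHom zero neg oplus φ) (a : α) : (φ (neg a)).1 = 1 - (φ a).1 := by
  rw [hφ.map_neg]; rfl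

lemma val_map_oplus (hφ : IsLukHom zero neg oplus φ) (a b : α) :
    (φ (oplus a b)).1 = min 1 ((φ a).1 + (φ b).1) := by
  rw [hφ.map_oplus]; rfl

lemma val_eq_zero_or_one_of_oplus_self (hφ : IsLukHom zero neg oplus φ) {a : α}
    (ha : oplus a a = a) : (φ a).1 = 0 ∨ (φ a).1 = 1 := by
  have h := hφ.val_map_oplus a a
  rw [ha] at h
  rcases min_choice 1 ((φ a).1 + (φ a).1) with h' | h' <;> rw [h'] at h
  · exact Or.inr h
  · exact Or.inl (by linarith)

end General

section Chain

variable {m N : ℕ+} {φ : Luk m → Luk N}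

lemma val_map_lukOf (hφ : IsLukHom (lukZero m) lukNeg lukOplus φ) (j : ℕ) (hj : j ≤ (m : ℕ)) :
    (φ (lukOf m j hj)).1 = min 1 (j * (φ (lukOf m 1 m.pos)).1) := by
  induction j with
  | zero => rw [lukOf_zero, hφ.val_map_zero]; simp
  | succ j ih =>
    rw [lukOf_succ _ _ hj, hφ.val_map_oplus, ih, min_one_min_one_add (Luk.val_nonneg _)]
    push_cast
    ring_nf

lemma val_map_lukOf_one (hφ : IsLukHom (lukZero m) lukNeg lukOplus φ) :
    (φ (lukOf m 1 m.pos)).1 = 1 / (m : ℕ) := by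
  set x := (φ (lukOf m 1 m.pos)).1
  have hM : (1 : ℚ) ≤ (m : ℕ) := by exact_mod_cast m.pos
  have htop := hφ.val_map_lukOf m le_rfl
  rw [lukOf_self, hφ.val_map_neg, hφ.val_map_zero] at htop
  have hpred := hφ.val_map_lukOf ((m : ℕ) - 1) (Nat.sub_le _ _)
  rw [← lukNeg_lukOf_one, hφ.val_map_neg, Nat.cast_sub m.pos, Nat.cast_one] at hpred
  have hmx : 1 ≤ (m : ℕ) * x := by
    by_contra! h
    rw [min_eq_right h.le] at htop
    linarith
  -- φ(¬(1/m)) = φ((m-1)/m) forces 1 - x = (m-1) x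
  have hx : ((m : ℕ) - 1 : ℚ) * x < 1 := by
    by_contra! h
    rw [min_eq_left h] at hpred
    nlinarith
  rw [min_eq_right hx.le] at hpred
  field_simp
  linarith

lemma val_map_of_chain (hφ : IsLukHom (lukZero m) lukNeg lukOplus φ) (x : Luk m) :
    (φ x).1 = x.1 := by
  obtain ⟨k, hk, rfl⟩ := x.exists_eq_lukOf
  rw [hφ.val_map_lukOf, hφ.val_map_lukOf_one, mul_one_div, ← lukOf_val m k hk,
    min_eq_right (Luk.val_le_one _)]

lemma dvd_of_chain (hφ : IsLukHom (lukZero m) lukNeg lukOplus φ) : (m : ℕ) ∣ (N : ℕ) := by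
  obtain ⟨k, -, hk⟩ := (φ (lukOf m 1 m.pos)).2
  rw [hφ.val_map_lukOf_one] at hk
  have hN : ((N : ℕ) : ℚ) ≠ 0 := by exact_mod_cast N.ne_zero
  have hM : ((m : ℕ) : ℚ) ≠ 0 := by exact_mod_cast m.ne_zero
  field_simp at hk
  exact Dvd.intro k (by exact_mod_cast hk.symm)

end Chain

end IsLukHom

section Product

variable {l : ℕ} {n : Fin l → ℕ+}

def prodZero (n : Fin l → ℕ+) : ∀ i, Luk (n i) := fun i => lukZero (n i)

def prodNeg (a : ∀ i, Luk (n i)) : ∀ i, Luk (n i) := fun i => lukNeg (a i)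

def prodOplus (a b : ∀ i, Luk (n i)) : ∀ i, Luk (n i) := fun i => lukOplus (a i) (b i)

@[simp] lemma prodZero_apply (i : Fin l) : prodZero n i = lukZero (n i) := rfl

@[simp] lemma prodNeg_apply (a : ∀ i, Luk (n i)) (i : Fin l) : prodNeg a i = lukNeg (a i) := rfl

@[simp] lemma prodOplus_apply (a b : ∀ i, Luk (n i)) (i : Fin l) :
    prodOplus a b i = lukOplus (a i) (b i) := rfl

def lukIndicator (n : Fin l → ℕ+) (s : Finset (Fin l)) : ∀ k, Luk (n k) :=
  fun k => if k ∈ s then lukNeg (lukZero (n k)) else lukZero (n k)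

lemma lukIndicator_val (s : Finset (Fin l)) (k : Fin l) :
    (lukIndicator n s k).1 = if k ∈ s then 1 else 0 := by
  unfold lukIndicator
  split_ifs <;> simp

lemma lukIndicator_empty : lukIndicator n ∅ = prodZero n := by
  funext k
  simp [lukIndicator]

lemma lukIndicator_univ : lukIndicator n Finset.univ = prodNeg (prodZero n) := by
  funext k
  simp [lukIndicator]

lemma prodOplus_lukIndicator_self (s : Finset (Fin l)) :
    prodOplus (lukIndicator n s) (lukIndicator n s) = lukIndicator n s := by
  funext k
  apply Subtype.ext
  simp only [prodOplus_apply, lukOplus_val, lukIndicator_val]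
  split_ifs <;> norm_num

lemma lukIndicator_insert (i : Fin l) (s : Finset (Fin l)) :
    lukIndicator n (insert i s) = prodOplus (lukIndicator n s) (lukIndicator n {i}) := by
  funext k
  apply Subtype.ext
  simp only [prodOplus_apply, lukOplus_val, lukIndicator_val, Finset.mem_insert,
    Finset.mem_singleton]
  split_ifs <;> simp_all

/-- `a ⊙ eᵢ = ¬(¬a ⊕ ¬eᵢ)` cuts `a` down to its coordinate `i`. -/
lemma update_prodZero_eq (a : ∀ k, Luk (n k)) (i : Fin l) :
    Function.update (prodZero n) i (a i) =
      prodNeg (prodOplus (prodNeg a) (prodNeg (lukIndicator n {i}))) := by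
  funext k
  apply Subtype.ext
  rcases eq_or_ne k i with rfl | hk
  · simp [lukIndicator_val, min_eq_right (sub_le_self 1 (Luk.val_nonneg (a k)))]
  · simp [lukIndicator_val, hk, min_eq_left (by linarith [Luk.val_le_one (a k)] :
      (1 : ℚ) ≤ 1 - (a k).1 + 1)]

end Product

namespace IsLukHom

variable {l : ℕ} {n : Fin l → ℕ+} {N : ℕ+} {φ : (∀ i, Luk (n i)) → Luk N}

lemma exists_val_map_lukIndicator_singleton (hφ : IsLukHom (prodZero n) prodNeg prodOplus φ) :
    ∃ i, (φ (lukIndicator n {i})).1 = 1 := by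
  by_contra! h
  have hzero : ∀ s, (φ (lukIndicator n s)).1 = 0 := by
    intro s
    induction s using Finset.induction_on with
    | empty => rw [lukIndicator_empty, hφ.val_map_zero]
    | insert i s _ ih =>
      have hi := (hφ.val_eq_zero_or_one_of_oplus_self (prodOplus_lukIndicator_self _)).resolve_right
        (h i)
      rw [lukIndicator_insert, hφ.val_map_oplus, ih, hi]
      norm_num
  have huniv := hzero Finset.univ
  rw [lukIndicator_univ, hφ.val_map_neg, hφ.val_map_zero] at huniv
  norm_num at huniv

variable {i : Fin l}

lemma val_map_update_prodZero (hφ : IsLukHom (prodZero n) prodNeg prodOplus φ)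
    (hi : (φ (lukIndicator n {i})).1 = 1) (a : ∀ k, Luk (n k)) :
    (φ (Function.update (prodZero n) i (a i))).1 = (φ a).1 := by
  rw [update_prodZero_eq, hφ.val_map_neg, hφ.val_map_oplus, hφ.val_map_neg, hφ.val_map_neg, hi,
    min_eq_right (by linarith [Luk.val_nonneg (φ a)])]
  ring

lemma comp_update_prodZero (hφ : IsLukHom (prodZero n) prodNeg prodOplus φ)
    (hi : (φ (lukIndicator n {i})).1 = 1) :
    IsLukHom (lukZero (n i)) lukNeg lukOplus fun u => φ (Function.update (prodZero n) i u) where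
  map_zero := by
    rw [← prodZero_apply, Function.update_eq_self, hφ.map_zero]
  map_neg u := by
    apply Subtype.ext
    have h := hφ.val_map_update_prodZero hi (prodNeg (Function.update (prodZero n) i u))
    rw [prodNeg_apply, Function.update_self] at h
    rw [h, hφ.val_map_neg, lukNeg_val]
  map_oplus u v := by
    apply Subtype.ext
    have h := hφ.val_map_update_prodZero hi
      (prodOplus (Function.update (prodZero n) i u) (Function.update (prodZero n) i v))
    rw [prodOplus_apply, Function.update_self, Function.update_self] at h
    rw [h, hφ.val_map_oplus, lukOplus_val]

theorem exists_coord (hφ : IsLukHom (prodZero n) prodNeg prodOplus φ) :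
    ∃ i, (n i : ℕ) ∣ (N : ℕ) ∧ ∀ a, (φ a).1 = (a i).1 := by
  obtain ⟨i, hi⟩ := hφ.exists_val_map_lukIndicator_singleton
  have hψ := hφ.comp_update_prodZero hi
  exact ⟨i, hψ.dvd_of_chain, fun a => by
    rw [← hφ.val_map_update_prodZero hi a]
    exact hψ.val_map_of_chain (a i)⟩

end IsLukHom

section Critical

variable {l : ℕ} {n : Fin l → ℕ+}

theorem prodLukCritical_of_forall_dvd (j₀ : Fin l)
    (h : ∀ i k, i ≠ k → (n i : ℕ) ∣ (n k : ℕ) → k = j₀) : ProdLukCritical n := by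
  rintro ⟨I, B, hB, f, hinj, hplus, hneg, hzero⟩
  have hcoord : ∀ t k, IsLukHom (prodZero n) prodNeg prodOplus
      fun a => (f a t : ∀ i, Luk (n i)) k := fun t k =>
    ⟨congrFun (hzero t) k, fun a => congrFun (hneg a t) k, fun a b => congrFun (hplus a b t) k⟩
  choose σ hσdvd hσ using fun t k => (hcoord t k).exists_coord
  have hfix : ∀ t k, k ≠ j₀ → σ t k = k := fun t k hk =>
    by_contra fun hne => hk (h _ _ hne (hσdvd t k))
  -- if `σ t` fixed `j₀` it would be the identity, making `B t` all of the product
  have hmoved : ∀ t, σ t j₀ ≠ j₀ := by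
    intro t hfixed
    refine (hB t).2 (Set.eq_univ_of_forall fun a => ?_)
    have hfa : (f a t : ∀ i, Luk (n i)) = a := by
      funext k
      apply Subtype.ext
      rw [hσ]
      rcases eq_or_ne k j₀ with rfl | hk
      · rw [hfixed]
      · rw [hfix t k hk]
    exact hfa ▸ (f a t).2
  have hmiss : ∀ t k, σ t k ≠ j₀ := fun t k => by
    rcases eq_or_ne k j₀ with rfl | hk
    · exact hmoved t
    · rwa [hfix t k hk]
  have heq : lukIndicator n {j₀} = prodZero n := hinj <| funext fun t => Subtype.ext <|
    funext fun k => Subtype.ext <| by simp [hσ, lukIndicator_val, hmiss t k]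
  simpa [lukIndicator_val] using congrArg Subtype.val (congrFun heq j₀)

end Critical

section NotCritical

variable {l : ℕ} {n : Fin l → ℕ+}

def coordEqSet (n : Fin l → ℕ+) (i j : Fin l) : Set (∀ k, Luk (n k)) := {a | (a i).1 = (a j).1}

lemma isProdSubalg_coordEqSet (i j : Fin l) : IsProdSubalg (coordEqSet n i j) := by
  refine ⟨rfl, fun x hx y hy => ?_, fun x hx => ?_⟩
  · change min 1 ((x i).1 + (y i).1) = min 1 ((x j).1 + (y j).1)
    rw [hx, hy]
  · change 1 - (x i).1 = 1 - (x j).1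
    rw [hx]

lemma coordEqSet_ne_univ {i j : Fin l} (hij : i ≠ j) : coordEqSet n i j ≠ Set.univ := by
  intro h
  have hmem : lukIndicator n {j} ∈ coordEqSet n i j := h ▸ Set.mem_univ _
  simp [coordEqSet, lukIndicator_val, hij] at hmem

def copyCoord {i j : Fin l} (hd : (n i : ℕ) ∣ (n j : ℕ)) (a : ∀ k, Luk (n k)) :
    ∀ k, Luk (n k) :=
  Function.update a j (lukCast hd (a i))

variable {i j : Fin l} (hd : (n i : ℕ) ∣ (n j : ℕ))

lemma copyCoord_apply_of_ne (a : ∀ k, Luk (n k)) {k : Fin l} (hk : k ≠ j) :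
    copyCoord hd a k = a k :=
  Function.update_of_ne hk _ _

lemma copyCoord_mem (hij : i ≠ j) (a : ∀ k, Luk (n k)) : copyCoord hd a ∈ coordEqSet n i j := by
  change (copyCoord hd a i).1 = (copyCoord hd a j).1
  rw [copyCoord_apply_of_ne hd a hij, copyCoord, Function.update_self, lukCast_val]

lemma copyCoord_prodZero : copyCoord hd (prodZero n) = prodZero n := by
  funext k
  rcases eq_or_ne k j with rfl | hk
  · exact Subtype.ext (by simp [copyCoord])
  · exact copyCoord_apply_of_ne hd _ hk

lemma copyCoord_prodNeg (a : ∀ k, Luk (n k)) :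
    copyCoord hd (prodNeg a) = prodNeg (copyCoord hd a) := by
  funext k
  rcases eq_or_ne k j with rfl | hk
  · exact Subtype.ext (by simp [copyCoord])
  · simp [copyCoord_apply_of_ne hd _ hk]

lemma copyCoord_prodOplus (a b : ∀ k, Luk (n k)) :
    copyCoord hd (prodOplus a b) = prodOplus (copyCoord hd a) (copyCoord hd b) := by
  funext k
  rcases eq_or_ne k j with rfl | hk
  · exact Subtype.ext (by simp [copyCoord])
  · simp [copyCoord_apply_of_ne hd _ hk]

end NotCritical

/-- Embeds the product into `∏ {a | a i = a j}` over all pairs `i ≠ j` with `n i ∣ n j`. -/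
theorem not_prodLukCritical {l : ℕ} {n : Fin l → ℕ+}
    (h : ∀ k, ∃ i j, i ≠ j ∧ (n i : ℕ) ∣ (n j : ℕ) ∧ j ≠ k) : ¬ ProdLukCritical n := by
  refine fun hcrit => hcrit ⟨{p : Fin l × Fin l // p.1 ≠ p.2 ∧ (n p.1 : ℕ) ∣ (n p.2 : ℕ)},
    fun p => coordEqSet n p.1.1 p.1.2,
    fun p => ⟨isProdSubalg_coordEqSet _ _, coordEqSet_ne_univ p.2.1⟩,
    fun a p => ⟨copyCoord p.2.2 a, copyCoord_mem p.2.2 p.2.1 a⟩, ?_,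
    fun a b p => copyCoord_prodOplus p.2.2 a b, fun a p => copyCoord_prodNeg p.2.2 a,
    fun p => copyCoord_prodZero p.2.2⟩
  intro a b hab
  funext k
  obtain ⟨i, j, hij, hd, hjk⟩ := h k
  have hk : copyCoord hd a k = copyCoord hd b k :=
    congrFun (congrArg Subtype.val (congrFun hab ⟨(i, j), hij, hd⟩)) k
  rwa [copyCoord_apply_of_ne hd a hjk.symm, copyCoord_apply_of_ne hd b hjk.symm] at hk

/-- Characterization of critical products of Łukasiewicz chains (Theorem 2.5):
∏ Ł_(n i) is critical iff the n i are pairwise distinct and there is at most one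
index j such that some other n i divides n j. -/
theorem prod_luk_critical_iff (l : ℕ) (hl : 1 ≤ l) (n : Fin l → ℕ+) :
    ProdLukCritical n ↔
      ((∀ i j : Fin l, i ≠ j → n i ≠ n j) ∧
        ∀ j j' : Fin l, (∃ i, i ≠ j ∧ (n i : ℕ) ∣ (n j : ℕ)) →
          (∃ i', i' ≠ j' ∧ (n i' : ℕ) ∣ (n j' : ℕ)) → j = j') := by
  constructor
  · intro hcrit
    have hbad : ∀ j j' : Fin l, (∃ i, i ≠ j ∧ (n i : ℕ) ∣ (n j : ℕ)) →
        (∃ i', i' ≠ j' ∧ (n i' : ℕ) ∣ (n j' : ℕ)) → j = j' := by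
      rintro j j' ⟨i, hij, hi⟩ ⟨i', hij', hi'⟩
      by_contra hjj'
      refine not_prodLukCritical (fun k => ?_) hcrit
      by_cases hjk : j = k
      · exact ⟨i', j', hij', hi', hjk ▸ Ne.symm hjj'⟩
      · exact ⟨i, j, hij, hi, hjk⟩
    refine ⟨fun i j hij hn => hij (hbad j i ⟨i, hij, hn ▸ dvd_rfl⟩ ⟨j, hij.symm, hn ▸ dvd_rfl⟩).symm,
      hbad⟩
  · rintro ⟨-, hbad⟩
    by_cases h : ∃ j i, i ≠ j ∧ (n i : ℕ) ∣ (n j : ℕ)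
    · obtain ⟨j, hj⟩ := h
      exact prodLukCritical_of_forall_dvd j fun i k hik hd => hbad k j ⟨i, hik, hd⟩ hj
    · exact prodLukCritical_of_forall_dvd ⟨0, hl⟩ fun i k hik hd => absurd ⟨k, i, hik, hd⟩ h
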